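/- Let C_n be the cycle graph on n ≥ 3 vertices v_1, …, v_n (with v_i adjacent to v_{i+1} and v_n adjacent to v_1), and let f = (f_1, …, f_n) be a divisor of degree 0 on C_n. Then f is good (linearly equivalent to 0) if and only if f_1 + 2 f_2 + ⋯ + (n−2) f_{n−2} + (n−1) f_{n−1} ≡ 0 (mod n). -/

import Mathlib

/-- A finite loopless multigraph on vertex set `V`, given by its symmetric
edge-multiplicity function `e`. -/
structure Multigraph (V : Type*) [Fintype V] [DecidableEq V] where
  e : V → V → ℕ
  symm : ∀ u v, e u v = e v u
  loopless : ∀ v, e v v = 0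

namespace Multigraph

variable {V : Type*} [Fintype V] [DecidableEq V]

/-- The degree of a vertex of a multigraph. -/
def vdeg (G : Multigraph V) (v : V) : ℕ := ∑ u, G.e v u

/-- The number of edges of a multigraph. -/
def edgeCount (G : Multigraph V) : ℕ := (∑ u, ∑ v, G.e u v) / 2

/-- The underlying simple graph (adjacency) of a multigraph. -/
def toSimple (G : Multigraph V) : SimpleGraph V where
  Adj u v := G.e u v ≠ 0
  symm := ⟨fun u v (h : G.e u v ≠ 0) => show G.e v u ≠ 0 by rwa [G.symm]⟩
  loopless := ⟨fun v (h : G.e v v ≠ 0) => h (G.loopless v)⟩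

/-- A multigraph is connected if its underlying simple graph is. -/
def Connected (G : Multigraph V) : Prop := G.toSimple.Connected

/-- The degree of a divisor `f : V → ℤ`. -/
def degree (f : V → ℤ) : ℤ := ∑ v, f v

/-- A divisor is effective if all its values are nonnegative. -/
def Effective (f : V → ℤ) : Prop := ∀ v, 0 ≤ f v

/-- The divisor `x · Δ_G`, where `Δ_G` is the Laplacian matrix of `G`. -/
def lapApply (G : Multigraph V) (x : V → ℤ) : V → ℤ :=
  fun v => x v * (G.vdeg v : ℤ) - ∑ u, x u * (G.e u v : ℤ)

/-- Linear equivalence of divisors: `g = f + x Δ_G` for some `x : V → ℤ`. -/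
def LinEquiv (G : Multigraph V) (f g : V → ℤ) : Prop :=
  ∃ x : V → ℤ, g = f + G.lapApply x

/-- A divisor is L-effective if it is linearly equivalent to an effective divisor. -/
def LEffective (G : Multigraph V) (f : V → ℤ) : Prop :=
  ∃ g : V → ℤ, G.LinEquiv f g ∧ Effective g

/-- The Baker–Norine rank of a divisor: `-1` if `f` is not L-effective, and
otherwise the largest `r ≥ 0` such that `f - λ` is L-effective for every
effective divisor `λ` of degree `r`. -/
noncomputable def rank (G : Multigraph V) (f : V → ℤ) : ℤ :=
  sSup ({-1} ∪ {r : ℤ | 0 ≤ r ∧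
    ∀ l : V → ℤ, Effective l → degree l = r → G.LEffective (f - l)})

/-- The divisor `ε_v`. -/
def epsDiv (v : V) : V → ℤ := fun u => if u = v then 1 else 0

/-- A tree: a connected acyclic (multi)graph. -/
def IsTree (G : Multigraph V) : Prop :=
  G.toSimple.IsTree ∧ ∀ u v, G.e u v ≤ 1

/-- A cycle graph: connected, and every vertex has degree 2. -/
def IsCycleGraph (G : Multigraph V) : Prop :=
  G.Connected ∧ ∀ v, G.vdeg v = 2

/-- An edge: two vertices joined by a single edge. -/
def IsEdgeGraph (G : Multigraph V) : Prop :=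
  Fintype.card V = 2 ∧ G.Connected ∧ ∀ u v, G.e u v ≤ 1

/-- A good divisor (on a cycle): degree `0` and linearly equivalent to `0`. -/
def Good (G : Multigraph V) (f : V → ℤ) : Prop :=
  degree f = 0 ∧ G.LinEquiv f 0

/-- A bad divisor (on a cycle): degree `0` and not linearly equivalent to `0`. -/
def Bad (G : Multigraph V) (f : V → ℤ) : Prop :=
  degree f = 0 ∧ ¬ G.LinEquiv f 0

/-- The induced sub-multigraph on a finite set `S` of vertices. -/
def induce (G : Multigraph V) (S : Finset V) : Multigraph {x // x ∈ S} where
  e a b := G.e a.1 b.1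
  symm := fun a b => G.symm a.1 b.1
  loopless := fun a => G.loopless a.1

/-- `v` decomposes the induced subgraph of `G` on `S` into the induced
subgraphs on `V1` and `U`: they cover `S`, meet exactly in `v`, are both
connected, and there is no edge between `V1 \ {v}` and `U \ {v}`. -/
def DecompOn (G : Multigraph V) (S : Finset V) (v : V) (V1 U : Finset V) : Prop :=
  V1 ∪ U = S ∧ V1 ∩ U = {v} ∧
  (G.induce V1).Connected ∧ (G.induce U).Connected ∧
  ∀ a ∈ V1, ∀ b ∈ U, a ≠ v → b ≠ v → G.e a b = 0

/-- `v` decomposes `G` into the induced subgraphs on `V1` and `U`. -/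
def Decomp (G : Multigraph V) (v : V) (V1 U : Finset V) : Prop :=
  G.DecompOn Finset.univ v V1 U

/-- The contraction `f_{G/H}` of a divisor `f`, where `H = G(U)` and
`G/H = G(V1)`, the cut vertex being `v`. -/
def contractDiv (f : V → ℤ) (v : V) (V1 U : Finset V) : {x // x ∈ V1} → ℤ :=
  fun u => if u.1 = v then ∑ w ∈ U, f w else f u.1

/-- The zero `f_{N(H)}` of a divisor `f`, where `H = G(U)`, the cut vertex
being `v`. -/
def zeroDiv (f : V → ℤ) (v : V) (U : Finset V) : {x // x ∈ U} → ℤ :=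
  fun u => if u.1 = v then - ∑ w ∈ U.erase v, f w else f u.1

/-- `ε_v` as a divisor on an induced subgraph. -/
def epsDivOn (S : Finset V) (v : V) : {x // x ∈ S} → ℤ :=
  fun u => if u.1 = v then 1 else 0

/-- A simple cycle of `G`, given as a sub-multigraph (an edge-multiplicity
function bounded by that of `G`) which is connected on its support and in
which every vertex of its (nonempty) support has degree 2. -/
def IsCycleSubgraph (G : Multigraph V) (h : V → V → ℕ) : Prop :=
  (∀ u v, h u v ≤ G.e u v) ∧ (∀ u v, h u v = h v u) ∧
  (∀ v, (∑ u, h v u = 0) ∨ (∑ u, h v u = 2)) ∧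
  (∃ v, ∑ u, h v u ≠ 0) ∧
  (∀ v w, (∑ u, h v u ≠ 0) → (∑ u, h w u ≠ 0) →
    Relation.ReflTransGen (fun a b => h a b ≠ 0) v w)

/-- The vertex support of a sub-multigraph. -/
def cycleSupport (h : V → V → ℕ) : Finset V :=
  Finset.univ.filter (fun v => ∑ u, h v u ≠ 0)

/-- A cactus: a connected multigraph in which any two distinct simple cycles
have at most one vertex in common (in particular every edge has multiplicity
at most 2, since parallel edges form 2-cycles). -/
def IsCactus (G : Multigraph V) : Prop :=
  G.Connected ∧ (∀ u v, G.e u v ≤ 2) ∧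
  ∀ h₁ h₂ : V → V → ℕ, G.IsCycleSubgraph h₁ → G.IsCycleSubgraph h₂ → h₁ ≠ h₂ →
    (cycleSupport h₁ ∩ cycleSupport h₂).card ≤ 1

/-- One step of a block elimination scheme: `G(S')` is obtained from `G(S)`
by contracting a free block (an edge or a cycle) `G(U)` at the vertex `v`. -/
def BlockStep (G : Multigraph V) (S S' : Finset V) : Prop :=
  ∃ (v : V) (U : Finset V), G.DecompOn S v S' U ∧
    ((G.induce U).IsEdgeGraph ∨ (G.induce U).IsCycleGraph)

/-- A block elimination scheme: a sequence of contractions of free blocks,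
starting from `G` and ending at a single vertex. -/
def HasBlockEliminationScheme (G : Multigraph V) : Prop :=
  ∃ (k : ℕ) (S : ℕ → Finset V), S 0 = Finset.univ ∧ (S k).card = 1 ∧
    ∀ i < k, G.BlockStep (S i) (S (i + 1))

end Multigraph

open Multigraph

variable {V : Type*} [Fintype V] [DecidableEq V]

/-- The cycle graph on `Fin n`, vertex `i` (representing `v_{i+1}`) being
adjacent to `i ± 1 (mod n)`. -/
def cycleGraph (n : ℕ) : Multigraph (Fin n) where
  e i j := if i ≠ j ∧ (((j : ℕ) = ((i : ℕ) + 1) % n) ∨ ((i : ℕ) = ((j : ℕ) + 1) % n))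
    then 1 else 0
  symm := by
    intro u v
    have h : (u ≠ v ∧ (((v : ℕ) = ((u : ℕ) + 1) % n) ∨ ((u : ℕ) = ((v : ℕ) + 1) % n))) ↔
        (v ≠ u ∧ (((u : ℕ) = ((v : ℕ) + 1) % n) ∨ ((v : ℕ) = ((u : ℕ) + 1) % n))) := by
      constructor <;> rintro ⟨h1, h2⟩ <;> exact ⟨h1.symm, h2.symm⟩
    simp only [h]
  loopless := by intro v; simp

/-! On `C_n` the Laplacian acts as `(x Δ)_v = 2 x_v - x_{v-1} - x_{v+1}`, so `f ∼ 0` exactly when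
`f` is a second cyclic difference: `f_v = d_v - d_{v-1}` with `d_v = x_{v+1} - x_v`. A function on
the cycle is a first cyclic difference iff its sum vanishes. Hence `deg f = 0` already gives
`f_v = d_v - d_{v-1}` for some `d`, unique up to an additive constant, and such a `d` can be shifted
to have sum `0` iff `n ∣ ∑ d`. Summing by parts against the weight `v ↦ v (mod n)`, which goes up by
exactly `1` at every step around the cycle, gives `∑ v f_v ≡ -∑ d (mod n)`. -/

open Finset

namespace Fin

variable {n : ℕ} [NeZero n]

theorem sum_comp_add_one {M : Type*} [AddCommMonoid M] (d : Fin n → M) :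
    ∑ v, d (v + 1) = ∑ v, d v :=
  Equiv.sum_comp (Equiv.addRight 1) d

open Fin.NatCast in
theorem exists_add_one_sub_eq_iff_sum_eq_zero {M : Type*} [AddCommGroup M] (g : Fin n → M) :
    (∃ d : Fin n → M, ∀ v, d (v + 1) - d v = g v) ↔ ∑ v, g v = 0 := by
  constructor
  · rintro ⟨d, hd⟩
    simp only [← hd, sum_sub_distrib, sum_comp_add_one, sub_self]
  · intro hg
    obtain ⟨m, rfl⟩ := Nat.exists_eq_succ_of_ne_zero (NeZero.ne n)
    have hg' : ∑ i ∈ range (m + 1), g i = 0 := by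
      simpa [← sum_univ_eq_sum_range (fun i => g i)] using hg
    refine ⟨fun v => ∑ i ∈ range v, g i, fun v => ?_⟩
    simp only [val_add_one]
    split_ifs with hv
    · subst hv
      rw [sum_range_succ, natCast_eq_last] at hg'
      simpa only [range_zero, sum_empty, val_last, zero_sub] using neg_eq_of_add_eq_zero_right hg'
    · simp [sum_range_succ]

theorem natCast_val_add_one (v : Fin n) : (((v + 1 : Fin n) : ℕ) : ZMod n) = (v : ℕ) + 1 := by
  rw [Fin.val_add, Fin.val_one', ZMod.natCast_mod, Nat.cast_add, ZMod.natCast_mod, Nat.cast_one]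

theorem sub_one_ne_add_one (hn : 3 ≤ n) (v : Fin n) : v - 1 ≠ v + 1 := by
  rw [Ne, sub_eq_iff_eq_add, add_assoc, left_eq_add, Fin.ext_iff, Fin.val_add, Fin.val_one',
    Nat.mod_eq_of_lt (by omega : 1 < n), Fin.val_zero, Nat.mod_eq_of_lt (by omega : 1 + 1 < n)]
  omega

theorem sum_mul_sub_sub_one {R : Type*} [CommRing R] (w g : Fin n → R)
    (hw : ∀ v, w (v + 1) = w v + 1) :
    ∑ v, w v * (g v - g (v - 1)) = -∑ v, g v := by
  have shift : ∑ v, w v * g (v - 1) = ∑ v, (w v + 1) * g v := by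
    rw [← sum_comp_add_one]
    simp [hw]
  simp only [mul_sub, sum_sub_distrib, shift, add_mul, sum_add_distrib, one_mul]
  ring

end Fin

section CycleGraph

variable {n : ℕ} [NeZero n]

theorem cycleGraph_e (hn : 3 ≤ n) (u v : Fin n) :
    (cycleGraph n).e u v = if u = v - 1 ∨ u = v + 1 then 1 else 0 := by
  have hsucc (i j : Fin n) : (j : ℕ) = ((i : ℕ) + 1) % n ↔ j = i + 1 := by
    rw [Fin.ext_iff, Fin.val_add, Fin.val_one', Nat.add_mod_mod]
  have hadj : u ≠ v ∧ (v = u + 1 ∨ u = v + 1) ↔ u = v - 1 ∨ u = v + 1 := by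
    rw [eq_sub_iff_add_eq, @eq_comm _ (u + 1), and_iff_right_iff_imp]
    rintro (rfl | rfl) <;> simp <;> omega
  simp only [cycleGraph, hsucc, hadj]

theorem cycleGraph_sum_mul_e (hn : 3 ≤ n) (x : Fin n → ℤ) (v : Fin n) :
    ∑ u, x u * ((cycleGraph n).e u v : ℤ) = x (v - 1) + x (v + 1) := by
  simp [cycleGraph_e hn, sum_ite, filter_or, filter_eq', sum_pair (Fin.sub_one_ne_add_one hn v)]

theorem cycleGraph_vdeg (hn : 3 ≤ n) (v : Fin n) : (cycleGraph n).vdeg v = 2 := by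
  have h := cycleGraph_sum_mul_e hn 1 v
  simp only [Pi.one_apply, one_mul, ← (cycleGraph n).symm v] at h
  unfold Multigraph.vdeg
  exact_mod_cast h

theorem cycleGraph_lapApply (hn : 3 ≤ n) (x : Fin n → ℤ) (v : Fin n) :
    (cycleGraph n).lapApply x v = 2 * x v - x (v - 1) - x (v + 1) := by
  rw [Multigraph.lapApply, cycleGraph_vdeg hn, cycleGraph_sum_mul_e hn]
  ring

theorem cycleGraph_linEquiv_zero_iff (hn : 3 ≤ n) (f : Fin n → ℤ) :
    (cycleGraph n).LinEquiv f 0 ↔ ∃ d : Fin n → ℤ, ∑ v, d v = 0 ∧ ∀ v, f v = d v - d (v - 1) := by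
  constructor
  · rintro ⟨x, hx⟩
    refine ⟨fun v => x (v + 1) - x v,
      (Fin.exists_add_one_sub_eq_iff_sum_eq_zero _).mp ⟨x, fun _ => rfl⟩, fun v => ?_⟩
    have hv := congrFun hx v
    simp only [Pi.zero_apply, Pi.add_apply, cycleGraph_lapApply hn] at hv
    simp only [sub_add_cancel]
    linarith
  · rintro ⟨d, hd, hfd⟩
    obtain ⟨x, hx⟩ := (Fin.exists_add_one_sub_eq_iff_sum_eq_zero d).mpr hd
    refine ⟨x, funext fun v => ?_⟩
    have hprev := hx (v - 1)
    rw [sub_add_cancel] at hprev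
    simp only [Pi.zero_apply, Pi.add_apply, cycleGraph_lapApply hn]
    linarith [hfd v, hx v]

theorem cycleGraph_linEquiv_zero_iff_sum_val_mul (hn : 3 ≤ n) (f : Fin n → ℤ)
    (hf : ∑ v, f v = 0) :
    (cycleGraph n).LinEquiv f 0 ↔ ∑ v : Fin n, ((v : ℕ) : ZMod n) * f v = 0 := by
  have by_parts (d : Fin n → ℤ) (hfd : ∀ v, f v = d v - d (v - 1)) :
      ∑ v : Fin n, ((v : ℕ) : ZMod n) * f v = -((∑ v, d v : ℤ) : ZMod n) := by
    simp only [hfd, Int.cast_sub, Int.cast_sum]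
    exact Fin.sum_mul_sub_sub_one _ _ Fin.natCast_val_add_one
  rw [cycleGraph_linEquiv_zero_iff hn]
  constructor
  · rintro ⟨d, hd, hfd⟩
    rw [by_parts d hfd, hd, Int.cast_zero, neg_zero]
  · intro hw
    obtain ⟨d, hd⟩ := (Fin.exists_add_one_sub_eq_iff_sum_eq_zero fun v => f (v + 1)).mpr
      (by rw [Fin.sum_comp_add_one f, hf])
    have hfd (v : Fin n) : f v = d v - d (v - 1) := by simpa using (hd (v - 1)).symm
    obtain ⟨k, hk⟩ : (n : ℤ) ∣ ∑ v, d v := by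
      rw [← ZMod.intCast_zmod_eq_zero_iff_dvd, ← neg_eq_zero, ← by_parts d hfd, hw]
    refine ⟨fun v => d v - k, ?_, fun v => by simp [hfd v]⟩
    simp [sum_sub_distrib, hk]

theorem intCast_sum_range_pred_eq_sum (f : Fin n → ℤ) :
    ((∑ i ∈ range (n - 1), ((i : ℤ) + 1) * f ⟨i % n, Nat.mod_lt i (NeZero.pos n)⟩ : ℤ) : ZMod n) =
      ∑ v : Fin n, (((v : ℕ) : ZMod n) + 1) * f v := by
  have hlast : ((n - 1 : ℕ) : ZMod n) + 1 = 0 := by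
    rw [← Nat.cast_add_one, Nat.sub_add_cancel (NeZero.pos n), ZMod.natCast_self]
  have hmod (v : Fin n) : f ⟨(v : ℕ) % n, Nat.mod_lt _ (NeZero.pos n)⟩ = f v :=
    congrArg f (Fin.ext (Nat.mod_eq_of_lt v.isLt))
  set h : ℕ → ZMod n := fun i => ((i : ZMod n) + 1) * f ⟨i % n, Nat.mod_lt i (NeZero.pos n)⟩
  push_cast
  calc _ = ∑ i ∈ range (n - 1 + 1), h i := by simp [sum_range_succ, h, hlast]
    _ = ∑ v : Fin n, h v := by rw [Nat.sub_add_cancel (NeZero.pos n), Fin.sum_univ_eq_sum_range]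
    _ = _ := sum_congr rfl fun v _ => by simp only [h, hmod]

end CycleGraph

/-- a divisor `f` of degree `0` on the cycle `C_n` (`n ≥ 3`),
with `f i` the value `f_{i+1}` at vertex `v_{i+1}`, is good (linearly
equivalent to `0`) iff `f_1 + 2 f_2 + ⋯ + (n−1) f_{n−1} ≡ 0 (mod n)`. -/
theorem good_iff_on_cycle (n : ℕ) (hn : 3 ≤ n) (f : Fin n → ℤ)
    (hdeg : degree f = 0) :
    (cycleGraph n).LinEquiv f 0 ↔
      (n : ℤ) ∣ ∑ i ∈ Finset.range (n - 1),
        ((i : ℤ) + 1) * f ⟨i % n, Nat.mod_lt i (by omega)⟩ := by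
  have : NeZero n := ⟨by omega⟩
  have hsum : ∑ v, f v = 0 := hdeg
  rw [cycleGraph_linEquiv_zero_iff_sum_val_mul hn f hsum, ← ZMod.intCast_zmod_eq_zero_iff_dvd,
    intCast_sum_range_pred_eq_sum]
  simp only [add_mul, one_mul, sum_add_distrib, ← Int.cast_sum, hsum, Int.cast_zero, add_zero]
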